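/- Let (H, ρ) be a Gessel pair. The primes of the free monoid H₋ of minus-paths are exactly those elements σ ∈ H such that ρ(σ) < 0 and every H-head of σ other than σ itself has nonnegative ρ-value. -/

import Mathlib

/-!
A minus-path whose proper prefixes all have nonnegative value cannot split into two nonempty
minus-paths, since the left factor would be a proper prefix of negative value. Conversely, if some
proper prefix of a prime minus-path `σ` is negative, cut `σ` at the first position where the
prefix value attains its minimum over proper prefixes: the left piece is a minus-path by
minimality, and every suffix of a minus-path is a minus-path, a forbidden factorization.
-/

def rhoVal {α : Type*} (ρ : α → ℤ) (l : List α) : ℤ := (l.map ρ).sum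

def IsMinusPath {α : Type*} (ρ : α → ℤ) (l : List α) : Prop :=
  l = [] ∨ (rhoVal ρ l < 0 ∧ ∀ i < l.length, rhoVal ρ l < rhoVal ρ (l.take i))

/-- `p` is a prime of the submonoid `M` of the free monoid on `α`. -/
def IsPrimeIn {α : Type*} (M : Set (List α)) (p : List α) : Prop :=
  p ∈ M ∧ p ≠ [] ∧ ∀ a b : List α, a ∈ M → b ∈ M → a ++ b = p → a = [] ∨ b = []

theorem Nat.exists_first_argmin_lt {β : Type*} [LinearOrder β] (f : ℕ → β) {n : ℕ}
    (hn : 0 < n) : ∃ k < n, (∀ i < n, f k ≤ f i) ∧ ∀ j < k, f k < f j := by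
  induction n, hn using Nat.le_induction with
  | base =>
    exact ⟨0, one_pos, fun i hi => by rw [Nat.lt_one_iff.mp hi], fun j hj => absurd hj j.not_lt_zero⟩
  | succ n _ ih =>
    obtain ⟨k, hk, hmin, hfirst⟩ := ih
    by_cases hnew : f n < f k
    · refine ⟨n, n.lt_succ_self, fun i hi => ?_, fun j hj => hnew.trans_le (hmin j hj)⟩
      rcases Nat.lt_succ_iff_lt_or_eq.mp hi with hi | rfl
      exacts [hnew.le.trans (hmin i hi), le_rfl]
    · refine ⟨k, hk.trans n.lt_succ_self, fun i hi => ?_, hfirst⟩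
      rcases Nat.lt_succ_iff_lt_or_eq.mp hi with hi | rfl
      exacts [hmin i hi, not_lt.mp hnew]

section MinusPath

variable {α : Type*} {ρ : α → ℤ}

@[simp]
theorem rhoVal_nil : rhoVal ρ [] = 0 := rfl

theorem rhoVal_append (a b : List α) : rhoVal ρ (a ++ b) = rhoVal ρ a + rhoVal ρ b := by
  simp [rhoVal]

theorem IsMinusPath.rhoVal_neg {l : List α} (h : IsMinusPath ρ l) (hl : l ≠ []) :
    rhoVal ρ l < 0 :=
  h.resolve_left hl |>.1

theorem IsMinusPath.drop {l : List α} (h : IsMinusPath ρ l) (i : ℕ) :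
    IsMinusPath ρ (l.drop i) := by
  rcases h with rfl | ⟨hneg, hpref⟩
  · simp [IsMinusPath]
  rcases le_or_gt l.length i with hi | hi
  · simp [IsMinusPath, List.drop_eq_nil_of_le hi]
  have hsplit (j : ℕ) :
      rhoVal ρ (l.take (i + j)) = rhoVal ρ (l.take i) + rhoVal ρ ((l.drop i).take j) := by
    rw [List.take_add, rhoVal_append]
  have hval : rhoVal ρ l = rhoVal ρ (l.take i) + rhoVal ρ (l.drop i) := by
    rw [← rhoVal_append, List.take_append_drop]
  refine Or.inr ⟨by linarith [hpref i hi], fun j hj => ?_⟩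
  rw [List.length_drop] at hj
  linarith [hpref (i + j) (by omega), hsplit j]

theorem isMinusPath_take {l : List α} {k : ℕ} (hneg : rhoVal ρ (l.take k) < 0)
    (hfirst : ∀ j < k, rhoVal ρ (l.take k) < rhoVal ρ (l.take j)) :
    IsMinusPath ρ (l.take k) := by
  refine Or.inr ⟨hneg, fun j hj => ?_⟩
  have hjk : j < k := hj.trans_le (List.length_take_le k l)
  rw [List.take_take, min_eq_left hjk.le]
  exact hfirst j hjk

theorem isPrimeIn_of_rhoVal_take_nonneg {σ : List α} (hneg : rhoVal ρ σ < 0)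
    (hpref : ∀ i < σ.length, 0 ≤ rhoVal ρ (σ.take i)) :
    IsPrimeIn {l | IsMinusPath ρ l} σ := by
  have hne : σ ≠ [] := by rintro rfl; simp at hneg
  refine ⟨Or.inr ⟨hneg, fun i hi => hneg.trans_le (hpref i hi)⟩, hne, ?_⟩
  rintro a b ha _ rfl
  by_contra! hab
  have ha_lt : a.length < (a ++ b).length := by simp [List.length_pos_iff.mpr hab.2]
  have ha_nonneg := hpref a.length ha_lt
  rw [List.take_left] at ha_nonneg
  exact (ha.rhoVal_neg hab.1).not_ge ha_nonneg

theorem IsPrimeIn.rhoVal_take_nonneg {σ : List α} (hσ : IsPrimeIn {l | IsMinusPath ρ l} σ) :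
    ∀ i < σ.length, 0 ≤ rhoVal ρ (σ.take i) := by
  obtain ⟨hσ, hne, hprime⟩ := hσ
  intro i hi
  by_contra! hi_neg
  obtain ⟨k, hk, hmin, hfirst⟩ :=
    Nat.exists_first_argmin_lt (fun j => rhoVal ρ (σ.take j)) (i.zero_le.trans_lt hi)
  have hk_neg : rhoVal ρ (σ.take k) < 0 := (hmin i hi).trans_lt hi_neg
  have hk_pos : k ≠ 0 := by rintro rfl; simp at hk_neg
  rcases hprime _ _ (isMinusPath_take hk_neg hfirst) (hσ.drop k) (σ.take_append_drop k) with h | h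
  · simp [List.take_eq_nil_iff, hne, hk_pos] at h
  · simp [List.drop_eq_nil_iff] at h
    omega

end MinusPath

/-- **Primes of the monoid of minus-paths.**
For a Gessel pair `(H, ρ)` (with `H` the free monoid on the set `α` of its
primes), the primes of the free monoid `H₋` of minus-paths are exactly the
elements `σ` with `ρ(σ) < 0` all of whose `H`-heads other than `σ` itself
(i.e. all proper prefixes) have nonnegative `ρ`-value. -/
theorem primes_of_minus_paths {α : Type*} (ρ : α → ℤ) (σ : List α) :
    IsPrimeIn {l : List α | IsMinusPath ρ l} σ ↔
      (rhoVal ρ σ < 0 ∧ ∀ i < σ.length, 0 ≤ rhoVal ρ (σ.take i)) :=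
  ⟨fun h => ⟨h.1.rhoVal_neg h.2.1, h.rhoVal_take_nonneg⟩,
    fun h => isPrimeIn_of_rhoVal_take_nonneg h.1 h.2⟩
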